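/- arXiv:1405.7931 — 2 statements merged into one kernel-verified Lean document; each statement's English description precedes it below -/
import Mathlib

section
/- Let G be a group with a right-invariant metric d, and let φ̄: G → ℝ be a homogeneous quasimorphism with defect D, Lipschitz with constant C with respect to d, vanishing on a symmetric subset A ⊆ G, and with φ̄(f) = c > 0 for some f ∈ G. Then for every m ∈ ℕ and every product h = h₁⋯h_k of k elements of A, one has C·d(f^m, h) ≥ c·m − k·D. Consequently, for every K ≥ 0 and k ∈ ℕ there exists f' ∈ G with d(f', A^k) ≥ K, where A^k denotes the set of products of k elements of A. -/
/-!
Write `x = g * h` with `h = h₁ ⋯ h_k`. Since `φ` vanishes on each `hᵢ`, peeling the factors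
off one at a time changes `φ` by at most `D` each, so `φ x ≤ φ g + k D`. Right invariance gives
`d(x, h) = d(1, g)`, and the Lipschitz bound gives `φ g ≤ C d(1, g)`. For `x = f^m` this reads
`c m - k D ≤ C d(f^m, h)`, whose left side is unbounded in `m`.
-/

lemma abs_sub_mul_list_prod_le {M : Type*} [Monoid M] {φ : M → ℝ} {D : ℝ}
    (hD : ∀ a b : M, |φ (a * b) - φ a - φ b| ≤ D) {A : Set M} (hvan : ∀ a ∈ A, φ a = 0)
    (g : M) {l : List M} (hl : ∀ h ∈ l, h ∈ A) :
    |φ (g * l.prod) - φ g| ≤ l.length * D := by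
  induction l generalizing g with
  | nil => simp
  | cons a t ih =>
    have hstep : |φ (g * a) - φ g| ≤ D := by
      simpa [hvan a (hl a List.mem_cons_self)] using hD g a
    have hrest := ih (g * a) fun h hh => hl h (List.mem_cons_of_mem a hh)
    rw [List.prod_cons, ← mul_assoc, List.length_cons, Nat.cast_succ, add_mul, one_mul]
    calc |φ (g * a * t.prod) - φ g|
        ≤ |φ (g * a * t.prod) - φ (g * a)| + |φ (g * a) - φ g| := abs_sub_le _ _ _
      _ ≤ t.length * D + D := add_le_add hrest hstep

lemma dist_eq_dist_one_mul_inv {G : Type*} [Group G] [MetricSpace G]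
    (hinv : ∀ a b f : G, dist (a * f) (b * f) = dist a b) (x y : G) :
    dist x y = dist 1 (x * y⁻¹) := by
  simpa [dist_comm] using hinv 1 (x * y⁻¹) y

lemma sub_length_mul_le_mul_dist_list_prod {G : Type*} [Group G] [MetricSpace G]
    (hinv : ∀ a b f : G, dist (a * f) (b * f) = dist a b) {φ : G → ℝ} {D C : ℝ}
    (hD : ∀ a b : G, |φ (a * b) - φ a - φ b| ≤ D) (hLip : ∀ g : G, |φ g| ≤ C * dist 1 g)
    {A : Set G} (hvan : ∀ a ∈ A, φ a = 0) (x : G) {l : List G} (hl : ∀ h ∈ l, h ∈ A) :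
    φ x - l.length * D ≤ C * dist x l.prod := by
  set g := x * l.prod⁻¹
  have hpeel := abs_sub_mul_list_prod_le hD hvan g hl
  rw [inv_mul_cancel_right] at hpeel
  rw [dist_eq_dist_one_mul_inv hinv]
  linarith [le_of_abs_le hpeel, le_of_abs_le (hLip g)]

lemma pos_of_abs_le_mul_dist {G : Type*} [Group G] [MetricSpace G] {φ : G → ℝ} {C : ℝ}
    (hLip : ∀ g : G, |φ g| ≤ C * dist 1 g) {f : G} (hf : 0 < φ f) : 0 < C :=
  pos_of_mul_pos_left (hf.trans_le ((le_abs_self _).trans (hLip f))) dist_nonneg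

theorem not_coarsely_dense_powers_of_qm_general {G : Type*} [Group G] [MetricSpace G]
    (hinv : ∀ a b f : G, dist (a * f) (b * f) = dist a b)
    (φ : G → ℝ) (D C : ℝ)
    (hD : ∀ a b : G, |φ (a * b) - φ a - φ b| ≤ D)
    (hhom : ∀ (g : G) (k : ℤ), φ (g ^ k) = k * φ g)
    (hLip : ∀ g : G, |φ g| ≤ C * dist 1 g)
    (A : Set G)
    (hvan : ∀ a ∈ A, φ a = 0)
    (f : G) (c : ℝ) (hc : φ f = c) (hcpos : 0 < c) :
    (∀ (m k : ℕ) (l : List G), (∀ h ∈ l, h ∈ A) → l.length = k →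
        c * m - k * D ≤ C * dist (f ^ m) l.prod) ∧
    ∀ K : ℝ, 0 ≤ K → ∀ k : ℕ, ∃ f' : G,
      ∀ l : List G, (∀ h ∈ l, h ∈ A) → l.length = k → K ≤ dist f' l.prod := by
  have hquant : ∀ (m k : ℕ) (l : List G), (∀ h ∈ l, h ∈ A) → l.length = k →
      c * m - k * D ≤ C * dist (f ^ m) l.prod := by
    rintro m k l hl rfl
    have hpow : φ (f ^ m) = c * m := by
      rw [← zpow_natCast, hhom, hc, mul_comm, Int.cast_natCast]
    simpa [hpow] using sub_length_mul_le_mul_dist_list_prod hinv hD hLip hvan (f ^ m) hl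
  refine ⟨hquant, fun K _ k => ?_⟩
  have hCpos : 0 < C := pos_of_abs_le_mul_dist hLip (hc ▸ hcpos)
  obtain ⟨m, hm⟩ := exists_nat_ge ((C * K + k * D) / c)
  rw [div_le_iff₀ hcpos] at hm
  refine ⟨f ^ m, fun l hl hlen => le_of_mul_le_mul_left ?_ hCpos⟩
  linarith [hquant m k l hl hlen]

/-- Quantitative version: `C·d(f^m, h₁⋯h_k) ≥ c·m − k·D` for products of `k` elements
of `A`, and consequently each `A^k` is not coarsely dense. -/
theorem not_coarsely_dense_powers_of_qm {G : Type*} [Group G] [MetricSpace G]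
    (hinv : ∀ a b f : G, dist (a * f) (b * f) = dist a b)
    (φ : G → ℝ) (D C : ℝ)
    (hD : ∀ a b : G, |φ (a * b) - φ a - φ b| ≤ D)
    (hhom : ∀ (g : G) (k : ℤ), φ (g ^ k) = k * φ g)
    (hLip : ∀ g : G, |φ g| ≤ C * dist 1 g)
    (A : Set G) (hAsymm : A⁻¹ = A)
    (hvan : ∀ a ∈ A, φ a = 0)
    (f : G) (c : ℝ) (hc : φ f = c) (hcpos : 0 < c) :
    (∀ (m k : ℕ) (l : List G), (∀ h ∈ l, h ∈ A) → l.length = k →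
        c * m - k * D ≤ C * dist (f ^ m) l.prod) ∧
    ∀ K : ℝ, 0 ≤ K → ∀ k : ℕ, ∃ f' : G,
      ∀ l : List G, (∀ h ∈ l, h ∈ A) → l.length = k → K ≤ dist f' l.prod :=
  not_coarsely_dense_powers_of_qm_general hinv φ D C hD hhom hLip A hvan f c hc hcpos
end

section
/- Let G be a group with a right-invariant metric d and φ̄: G → ℝ a homogeneous quasimorphism with defect D. Suppose there is C > 0 with |φ̄(g)| ≤ C·d(1,g) for all g. Then for any f, h ∈ G and any p ∈ ℕ, |φ̄(f) − φ̄(h)| ≤ (D + |φ̄(f^p h^{−p})|)/p ≤ (D + C·d(h^p, f^p))/p. In particular, if for every p there exist elements h with d(h^p, f^p) < 1, then φ̄ is continuous with respect to such approximations: |φ̄(f) − φ̄(h)| ≤ (D + C)/p. -/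
/-!
Evaluating the quasimorphism inequality at `f ^ p` and `(h ^ p)⁻¹` and using homogeneity gives
`p * |φ f - φ h| ≤ D + |φ (f ^ p * (h ^ p)⁻¹)|`. Right invariance turns `d(1, f ^ p (h ^ p)⁻¹)`
into `d(h ^ p, f ^ p)`, so the Lipschitz bound controls the error term.
-/

section Quasimorphism

variable {G : Type*} [Group G] {φ : G → ℝ}

lemma map_pow_of_map_zpow (hhom : ∀ (g : G) (k : ℤ), φ (g ^ k) = k * φ g) (g : G) (n : ℕ) :
    φ (g ^ n) = n * φ g := by
  simpa using hhom g n

lemma map_inv_of_map_zpow (hhom : ∀ (g : G) (k : ℤ), φ (g ^ k) = k * φ g) (g : G) :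
    φ g⁻¹ = -φ g := by
  simpa using hhom g (-1)

lemma abs_add_le_of_defect {D : ℝ} (hD : ∀ a b : G, |φ (a * b) - φ a - φ b| ≤ D) (a b : G) :
    |φ a + φ b| ≤ D + |φ (a * b)| := by
  have := hD a b
  calc |φ a + φ b| = |φ (a * b) - (φ (a * b) - φ a - φ b)| := by ring_nf
    _ ≤ |φ (a * b)| + |φ (a * b) - φ a - φ b| := abs_sub _ _
    _ ≤ D + |φ (a * b)| := by linarith

lemma mul_abs_sub_le_of_homogeneous {D : ℝ} (hD : ∀ a b : G, |φ (a * b) - φ a - φ b| ≤ D)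
    (hhom : ∀ (g : G) (k : ℤ), φ (g ^ k) = k * φ g) (f h : G) (p : ℕ) :
    p * |φ f - φ h| ≤ D + |φ (f ^ p * (h ^ p)⁻¹)| := by
  have := abs_add_le_of_defect hD (f ^ p) (h ^ p)⁻¹
  rwa [map_inv_of_map_zpow hhom, map_pow_of_map_zpow hhom, map_pow_of_map_zpow hhom,
    ← sub_eq_add_neg, ← mul_sub, abs_mul, Nat.abs_cast] at this

end Quasimorphism

lemma dist_one_mul_inv_of_right_invariant {G : Type*} [Group G] [MetricSpace G]
    (hinv : ∀ a b f : G, dist (a * f) (b * f) = dist a b) (a b : G) :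
    dist 1 (a * b⁻¹) = dist b a := by
  rw [← hinv 1 (a * b⁻¹) b, one_mul, inv_mul_cancel_right, dist_comm]

/-- Continuity estimate: for a Lipschitz homogeneous quasimorphism on a group with a
right-invariant metric, `|φ(f) − φ(h)| ≤ (D + |φ(f^p h^{−p})|)/p ≤ (D + C·d(h^p, f^p))/p`,
and if `d(h^p, f^p) < 1` then `|φ(f) − φ(h)| ≤ (D + C)/p`. -/
theorem homogeneous_qm_continuity_estimate {G : Type*} [Group G] [MetricSpace G]
    (hinv : ∀ a b f : G, dist (a * f) (b * f) = dist a b)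
    (φ : G → ℝ) (D C : ℝ) (hC : 0 < C)
    (hD : ∀ a b : G, |φ (a * b) - φ a - φ b| ≤ D)
    (hhom : ∀ (g : G) (k : ℤ), φ (g ^ k) = k * φ g)
    (hLip : ∀ g : G, |φ g| ≤ C * dist 1 g)
    (f h : G) (p : ℕ) (hp : 1 ≤ p) :
    |φ f - φ h| ≤ (D + |φ (f ^ p * (h ^ p)⁻¹)|) / p ∧
    (D + |φ (f ^ p * (h ^ p)⁻¹)|) / p ≤ (D + C * dist (h ^ p) (f ^ p)) / p ∧
    (dist (h ^ p) (f ^ p) < 1 → |φ f - φ h| ≤ (D + C) / p) := by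
  have hp0 : (0 : ℝ) < p := by exact_mod_cast hp
  have key : |φ f - φ h| ≤ (D + |φ (f ^ p * (h ^ p)⁻¹)|) / p := by
    rw [le_div_iff₀ hp0, mul_comm]
    exact mul_abs_sub_le_of_homogeneous hD hhom f h p
  have lip : |φ (f ^ p * (h ^ p)⁻¹)| ≤ C * dist (h ^ p) (f ^ p) := by
    simpa only [dist_one_mul_inv_of_right_invariant hinv] using hLip (f ^ p * (h ^ p)⁻¹)
  have mid : (D + |φ (f ^ p * (h ^ p)⁻¹)|) / p ≤ (D + C * dist (h ^ p) (f ^ p)) / p := by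
    gcongr
  refine ⟨key, mid, fun hlt => (key.trans mid).trans ?_⟩
  gcongr
  exact mul_le_of_le_one_right hC.le hlt.le
end
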